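/- arXiv:1607.00365 — 7 statements merged into one kernel-verified Lean document; each statement's English description precedes it below -/
import Mathlib

section
/- Let V be a real Banach space, T : V → V a continuous linear map, and r > 0. Suppose ξ : ℝ → V is analytic on the open ball B(0,r) ⊆ ℝ and satisfies ξ(α) = α • T (ξ(α)) for every α ∈ B(0,r). Then ξ(α) = 0 for every α ∈ B(0,r). -/
/-- Let `V` be a real Banach space, `T : V → V` a continuous linear map
and `r : ℝ` with `0 < r`. If `ξ : ℝ → V` is analytic on the open ball `B(0,r) ⊆ ℝ` and satisfies the
fixed-point equation `ξ α = α • T (ξ α)` for every `α ∈ B(0,r)`, then `ξ` vanishes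
identically on `B(0,r)`. -/
theorem regular_zero_mode_vanishes
    (V : Type*) [NormedAddCommGroup V] [NormedSpace ℝ V] [CompleteSpace V]
    (T : V →L[ℝ] V) (r : ℝ) (hr : 0 < r) (ξ : ℝ → V)
    (hξ : AnalyticOnNhd ℝ ξ (Metric.ball (0 : ℝ) r))
    (hfix : ∀ α ∈ Metric.ball (0 : ℝ) r, ξ α = α • T (ξ α)) :
    ∀ α ∈ Metric.ball (0 : ℝ) r, ξ α = 0 := by
  set ε : ℝ := min r (1 / (‖T‖ + 1)) with hε
  have hT1 : 0 < ‖T‖ + 1 := by positivity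
  have hεpos : 0 < ε := lt_min hr (by positivity)
  have hsmall : ∀ α ∈ Metric.ball (0 : ℝ) ε, ξ α = 0 := by
    intro α hα
    have hαr : α ∈ Metric.ball (0 : ℝ) r :=
      Metric.ball_subset_ball (min_le_left _ _) hα
    have habs : |α| < 1 / (‖T‖ + 1) := by
      have := Metric.mem_ball.mp hα
      simpa [Real.dist_eq] using lt_of_lt_of_le this (min_le_right _ _)
    have h1 : ‖ξ α‖ ≤ |α| * (‖T‖ * ‖ξ α‖) := by
      calc ‖ξ α‖ = ‖α • T (ξ α)‖ := by rw [← hfix α hαr]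
        _ = |α| * ‖T (ξ α)‖ := by rw [norm_smul, Real.norm_eq_abs]
        _ ≤ |α| * (‖T‖ * ‖ξ α‖) := by
            exact mul_le_mul_of_nonneg_left (T.le_opNorm _) (abs_nonneg α)
    have habs' : |α| * (‖T‖ + 1) < 1 := by
      have := mul_lt_mul_of_pos_right habs hT1
      rwa [one_div, inv_mul_cancel₀ (ne_of_gt hT1)] at this
    by_contra hne
    have hpos : 0 < ‖ξ α‖ := norm_pos_iff.mpr hne
    nlinarith [abs_nonneg α, norm_nonneg T]
  have hconn : IsPreconnected (Metric.ball (0 : ℝ) r) :=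
    (convex_ball (0:ℝ) r).isPreconnected
  have h0mem : (0 : ℝ) ∈ Metric.ball (0 : ℝ) r := by simpa using hr
  have hev : ξ =ᶠ[nhds (0 : ℝ)] 0 := by
    filter_upwards [Metric.ball_mem_nhds (0 : ℝ) hεpos] with α hα
    exact hsmall α hα
  exact fun α hα => hξ.eqOn_zero_of_preconnected_of_eventuallyEq_zero hconn h0mem hev hα
end

section
/- Let d ≥ 1 and let f : ℝ → ℝ be measurable such that x ↦ f(‖x‖)·‖x‖² is Lebesgue integrable on ℝ^d. Then for all indices i, j ∈ {1, …, d}, ∫_{ℝ^d} f(‖x‖) x_i x_j dx = (δ_{ij}/d) · ∫_{ℝ^d} f(‖x‖) ‖x‖² dx, where δ_{ij} is the Kronecker delta. -/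
open MeasureTheory

/-- Rotational-symmetry moment identity for radial integrands: if
`x ↦ f(‖x‖)·‖x‖²` is Lebesgue integrable on `ℝ^d`, then for all `i, j`,
`∫ f(‖x‖) x_i x_j dx = (δ_{ij}/d) · ∫ f(‖x‖) ‖x‖² dx`. -/
theorem radial_moment_identity (d : ℕ) (hd : 1 ≤ d) (f : ℝ → ℝ) (hf : Measurable f)
    (hint : Integrable (fun x : EuclideanSpace ℝ (Fin d) => f ‖x‖ * ‖x‖ ^ 2)) :
    ∀ i j : Fin d,
      ∫ x : EuclideanSpace ℝ (Fin d), f ‖x‖ * (x i * x j)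
        = ((if i = j then (1 : ℝ) else 0) / d)
            * ∫ x : EuclideanSpace ℝ (Fin d), f ‖x‖ * ‖x‖ ^ 2 := by
  have hnormsq : ∀ x : EuclideanSpace ℝ (Fin d), ‖x‖ ^ 2 = ∑ k, x k ^ 2 := by
    intro x
    rw [EuclideanSpace.norm_eq, Real.sq_sqrt (by positivity)]
    simp [sq_abs]
  have habs : ∀ (x : EuclideanSpace ℝ (Fin d)) (i : Fin d), |x i| ≤ ‖x‖ := by
    intro x i
    rw [EuclideanSpace.norm_eq, ← Real.sqrt_sq_eq_abs (x i)]
    apply Real.sqrt_le_sqrt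
    simpa [sq_abs] using Finset.single_le_sum
      (f := fun k => x k ^ 2) (fun k _ => sq_nonneg (x k)) (Finset.mem_univ i)
  have hcoord : ∀ i : Fin d, Measurable fun x : EuclideanSpace ℝ (Fin d) => x i :=
    fun i => (EuclideanSpace.proj i).continuous.measurable
  -- integrability of each moment integrand
  have hInt : ∀ i j : Fin d,
      Integrable (fun x : EuclideanSpace ℝ (Fin d) => f ‖x‖ * (x i * x j)) := by
    intro i j
    refine hint.mono (((hf.comp measurable_norm).mul
      ((hcoord i).mul (hcoord j))).aestronglyMeasurable) ?_
    filter_upwards with x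
    simp only [Real.norm_eq_abs, abs_mul]
    apply mul_le_mul_of_nonneg_left _ (abs_nonneg _)
    calc |x i| * |x j| ≤ ‖x‖ * ‖x‖ := by
          exact mul_le_mul (habs x i) (habs x j) (abs_nonneg _) (norm_nonneg _)
      _ = ‖x‖ ^ 2 := (sq ‖x‖).symm
      _ ≤ |‖x‖ ^ 2| := le_abs_self _
  -- off-diagonal vanishing
  have hoff : ∀ i j : Fin d, i ≠ j →
      ∫ x : EuclideanSpace ℝ (Fin d), f ‖x‖ * (x i * x j) = 0 := by
    intro i j hij
    set e : EuclideanSpace ℝ (Fin d) ≃ₗᵢ[ℝ] EuclideanSpace ℝ (Fin d) :=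
      LinearIsometryEquiv.piLpCongrRight 2
        (fun k : Fin d => if k = i then .neg ℝ else .refl ℝ ℝ) with he
    have happ : ∀ (x : EuclideanSpace ℝ (Fin d)) (k : Fin d),
        e x k = if k = i then -(x k) else x k := by
      intro x k
      rw [he, LinearIsometryEquiv.piLpCongrRight_apply]
      rcases eq_or_ne k i with rfl | h
      · simp
      · simp [h]
    have hchange : ∫ x : EuclideanSpace ℝ (Fin d), f ‖x‖ * (x i * x j)
        = ∫ x : EuclideanSpace ℝ (Fin d), f ‖e x‖ * ((e x) i * (e x) j) :=
      (e.measurePreserving.integral_comp e.toHomeomorph.measurableEmbedding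
        (fun x => f ‖x‖ * (x i * x j))).symm
    have : ∀ x : EuclideanSpace ℝ (Fin d),
        f ‖e x‖ * ((e x) i * (e x) j) = -(f ‖x‖ * (x i * x j)) := by
      intro x
      rw [e.norm_map, happ, happ, if_pos rfl, if_neg (Ne.symm hij)]
      ring
    have h2 : ∫ x : EuclideanSpace ℝ (Fin d), f ‖x‖ * (x i * x j)
        = -∫ x : EuclideanSpace ℝ (Fin d), f ‖x‖ * (x i * x j) := by
      refine hchange.trans ?_
      simp_rw [this]
      exact integral_neg fun x : EuclideanSpace ℝ (Fin d) => f ‖x‖ * (x i * x j)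
    linarith
  -- diagonal: all coordinates give the same integral
  have i0 : Fin d := ⟨0, hd⟩
  have hswap : ∀ i : Fin d,
      ∫ x : EuclideanSpace ℝ (Fin d), f ‖x‖ * (x i * x i)
        = ∫ x : EuclideanSpace ℝ (Fin d), f ‖x‖ * (x i0 * x i0) := by
    intro i
    set e : EuclideanSpace ℝ (Fin d) ≃ₗᵢ[ℝ] EuclideanSpace ℝ (Fin d) :=
      LinearIsometryEquiv.piLpCongrLeft 2 ℝ ℝ (Equiv.swap i i0) with he
    have happ : ∀ x : EuclideanSpace ℝ (Fin d), e x i0 = x i := by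
      intro x
      rw [he, LinearIsometryEquiv.piLpCongrLeft_apply]
      simp only [Equiv.piCongrLeft'_apply]
      rw [Equiv.symm_swap, Equiv.swap_apply_right]
    have hchange : ∫ x : EuclideanSpace ℝ (Fin d), f ‖x‖ * (x i0 * x i0)
        = ∫ x : EuclideanSpace ℝ (Fin d), f ‖e x‖ * ((e x) i0 * (e x) i0) :=
      (e.measurePreserving.integral_comp e.toHomeomorph.measurableEmbedding
        (fun x => f ‖x‖ * (x i0 * x i0))).symm
    rw [hchange]
    congr 1
    funext x
    rw [e.norm_map, happ]
  have hsum : (d : ℝ) * (∫ x : EuclideanSpace ℝ (Fin d), f ‖x‖ * (x i0 * x i0))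
      = ∫ x : EuclideanSpace ℝ (Fin d), f ‖x‖ * ‖x‖ ^ 2 := by
    have h1 : ∑ k : Fin d, ∫ x : EuclideanSpace ℝ (Fin d), f ‖x‖ * (x k * x k)
        = ∫ x : EuclideanSpace ℝ (Fin d), ∑ k : Fin d, f ‖x‖ * (x k * x k) :=
      (integral_finset_sum _ (fun k _ => hInt k k)).symm
    have h2 : ∀ x : EuclideanSpace ℝ (Fin d),
        ∑ k : Fin d, f ‖x‖ * (x k * x k) = f ‖x‖ * ‖x‖ ^ 2 := by
      intro x
      rw [hnormsq, Finset.mul_sum]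
      exact Finset.sum_congr rfl fun k _ => by ring
    simp_rw [hswap, Finset.sum_const, Finset.card_univ, Fintype.card_fin,
      nsmul_eq_mul] at h1
    simp_rw [h2] at h1
    exact h1
  intro i j
  by_cases h : i = j
  · subst h
    rw [hswap i, if_pos rfl, ← hsum]
    have hd0 : (d : ℝ) ≠ 0 := by positivity
    field_simp
  · rw [hoff i j h, if_neg h, zero_div, zero_mul]
end

section
/- Fix an integer N ≥ 1, g > 0 and Λ > 0. There is a unique a > 0 satisfying Gribov's one-loop gap equation (3Ng²/4) · (2π)^{-4} · ∫_{{x ∈ ℝ⁴ : ‖x‖ ≤ Λ}} dx/(‖x‖⁴ + a) = 1, namely a = Λ⁴ / (exp(128π²/(3Ng²)) − 1). Equivalently, the Gribov parameter γ defined through a = 2Ng²γ⁴ satisfies γ⁴ = Λ⁴ / (2Ng² (exp(128π²/(3Ng²)) − 1)). -/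
open MeasureTheory Real

/-!
In polar coordinates the integral over the ball of radius `Λ` in `ℝ⁴` is
`2π² ∫₀^Λ r³ dr / (r⁴ + a) = (π²/2) log ((Λ⁴ + a)/a)`, so the gap equation says
`log (1 + Λ⁴/a) = 128π²/(3Ng²)`, which has exactly one solution `a > 0` because the right-hand
side is positive.
-/

open Metric Set Module in
theorem setIntegral_closedBall_fun_norm {E F : Type*} [NormedAddCommGroup E] [NormedSpace ℝ E]
    [Nontrivial E] [FiniteDimensional ℝ E] [MeasurableSpace E] [BorelSpace E]
    [NormedAddCommGroup F] [NormedSpace ℝ F] (μ : Measure E) [μ.IsAddHaarMeasure]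
    (f : ℝ → F) {R : ℝ} (hR : 0 ≤ R) :
    ∫ x in closedBall (0 : E) R, f ‖x‖ ∂μ
      = finrank ℝ E • μ.real (ball 0 1) • ∫ r in 0..R, r ^ (finrank ℝ E - 1) • f r := by
  have hball : closedBall (0 : E) R = (‖·‖) ⁻¹' Iic R := by
    ext x
    simp
  have hind (x : E) : (closedBall 0 R).indicator (fun x => f ‖x‖) x = (Iic R).indicator f ‖x‖ := by
    rw [hball]
    exact indicator_comp_right _
  rw [← integral_indicator measurableSet_closedBall, funext hind, integral_fun_norm_addHaar μ,
    intervalIntegral.integral_of_le hR, ← indicator_smul,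
    setIntegral_indicator measurableSet_Iic, Ioi_inter_Iic]

theorem integral_pow_three_div_pow_four_add {a : ℝ} (ha : 0 < a) (R : ℝ) :
    ∫ r in (0 : ℝ)..R, r ^ 3 * (1 / (r ^ 4 + a)) = log ((R ^ 4 + a) / a) / 4 := by
  have hpos : ∀ r : ℝ, 0 < r ^ 4 + a := fun r => by positivity
  have hderiv : ∀ r ∈ Set.uIcc (0 : ℝ) R,
      HasDerivAt (fun r => log (r ^ 4 + a) / 4) (r ^ 3 * (1 / (r ^ 4 + a))) r := by
    intro r _
    refine ((((hasDerivAt_pow 4 r).add_const a).log (hpos r).ne').div_const 4).congr_deriv ?_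
    field_simp
    norm_num [mul_comm]
  have hcont : Continuous fun r : ℝ => r ^ 3 * (1 / (r ^ 4 + a)) := by
    fun_prop (disch := exact fun r => (hpos r).ne')
  rw [intervalIntegral.integral_eq_sub_of_hasDerivAt hderiv (hcont.intervalIntegrable _ _),
    log_div (hpos R).ne' ha.ne', zero_pow four_ne_zero, zero_add]
  ring

open Metric in
theorem setIntegral_closedBall_one_div_norm_pow_four_add {a Λ : ℝ} (ha : 0 < a) (hΛ : 0 ≤ Λ) :
    ∫ x in closedBall (0 : EuclideanSpace ℝ (Fin 4)) Λ, 1 / (‖x‖ ^ 4 + a)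
      = π ^ 2 / 2 * log ((Λ ^ 4 + a) / a) := by
  have hdim : Module.finrank ℝ (EuclideanSpace ℝ (Fin 4)) = 4 := by simp
  have hvol : volume.real (ball (0 : EuclideanSpace ℝ (Fin 4)) 1) = π ^ 2 / 2 := by
    rw [measureReal_def, InnerProductSpace.volume_ball_of_dim_even (k := 2) (by simp)]
    simp [div_nonneg, pi_nonneg]
  rw [setIntegral_closedBall_fun_norm volume (fun r => 1 / (r ^ 4 + a)) hΛ, hdim, hvol]
  simp only [nsmul_eq_mul, smul_eq_mul, Nat.add_one_sub_one]
  rw [integral_pow_three_div_pow_four_add ha]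
  push_cast
  ring

theorem log_add_div_self_eq_iff {L a c : ℝ} (hL : 0 < L) (ha : 0 < a) :
    log ((L + a) / a) = c ↔ a = L / (exp c - 1) := by
  rw [← exp_eq_exp, exp_log (by positivity)]
  constructor
  · intro h
    rw [← h, add_div, div_self ha.ne', add_sub_cancel_right, div_div_cancel₀ hL.ne']
  · rintro rfl
    have : exp c - 1 ≠ 0 := by
      intro h
      simp [h] at ha
    field_simp
    ring

theorem gribov_gap_equation_iff {k a Λ : ℝ} (hk : k ≠ 0) (ha : 0 < a) (hΛ : 0 < Λ) :
    k / 4 * ((2 * π) ^ 4)⁻¹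
        * ∫ x in Metric.closedBall (0 : EuclideanSpace ℝ (Fin 4)) Λ, 1 / (‖x‖ ^ 4 + a) = 1
      ↔ a = Λ ^ 4 / (exp (128 * π ^ 2 / k) - 1) := by
  have hcoeff : k / 4 * ((2 * π) ^ 4)⁻¹ * (π ^ 2 / 2) = k / (128 * π ^ 2) := by
    field_simp
    ring
  rw [setIntegral_closedBall_one_div_norm_pow_four_add ha hΛ.le, ← mul_assoc, hcoeff,
    ← log_add_div_self_eq_iff (by positivity) ha, eq_div_iff hk, div_mul_eq_mul_div,
    div_eq_one_iff_eq (by positivity), mul_comm]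

/-- Gribov's one-loop gap equation
`(3Ng²/4)·(2π)⁻⁴·∫_{‖x‖ ≤ Λ} dx/(‖x‖⁴ + a) = 1` has a unique solution `a > 0`, namely
`a = Λ⁴/(exp(128π²/(3Ng²)) − 1)`; equivalently the Gribov parameter `γ` defined through
`a = 2Ng²γ⁴` satisfies `γ⁴ = Λ⁴/(2Ng²(exp(128π²/(3Ng²)) − 1))`. -/
theorem gribov_gap_equation_unique_solution (N : ℕ) (hN : 1 ≤ N) (g Λ : ℝ)
    (hg : 0 < g) (hΛ : 0 < Λ) :
    (0 < Λ ^ 4 / (Real.exp (128 * π ^ 2 / (3 * N * g ^ 2)) - 1)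
      ∧ (3 * N * g ^ 2 / 4) * ((2 * π) ^ 4)⁻¹
          * ∫ x in Metric.closedBall (0 : EuclideanSpace ℝ (Fin 4)) Λ,
              1 / (‖x‖ ^ 4 + Λ ^ 4 / (Real.exp (128 * π ^ 2 / (3 * N * g ^ 2)) - 1)) = 1)
    ∧ (∀ a : ℝ, 0 < a →
        (3 * N * g ^ 2 / 4) * ((2 * π) ^ 4)⁻¹
            * ∫ x in Metric.closedBall (0 : EuclideanSpace ℝ (Fin 4)) Λ,
                1 / (‖x‖ ^ 4 + a) = 1 →
        a = Λ ^ 4 / (Real.exp (128 * π ^ 2 / (3 * N * g ^ 2)) - 1))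
    ∧ (∀ γ : ℝ,
        Λ ^ 4 / (Real.exp (128 * π ^ 2 / (3 * N * g ^ 2)) - 1) = 2 * N * g ^ 2 * γ ^ 4 →
        γ ^ 4 = Λ ^ 4 / (2 * N * g ^ 2 * (Real.exp (128 * π ^ 2 / (3 * N * g ^ 2)) - 1))) := by
  have hN₀ : (0 : ℝ) < N := by exact_mod_cast hN
  have hk : (0 : ℝ) < 3 * N * g ^ 2 := by positivity
  have ha₀ : 0 < Λ ^ 4 / (exp (128 * π ^ 2 / (3 * N * g ^ 2)) - 1) :=
    div_pos (by positivity) (sub_pos.2 (one_lt_exp_iff.2 (by positivity)))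
  refine ⟨⟨ha₀, (gribov_gap_equation_iff hk.ne' ha₀ hΛ).2 rfl⟩,
    fun a ha => (gribov_gap_equation_iff hk.ne' ha hΛ).1, fun γ hγ => ?_⟩
  rw [mul_comm (2 * (N : ℝ) * g ^ 2), ← div_div, hγ, mul_div_cancel_left₀ _ (by positivity)]
end

section
/- For all k > 0 and q > 0, ∫₀^{2π} (1 − cos²φ) / (k² + q² − 2kq·cos φ) dφ = π / (max(k, q))². Equivalently, the integral equals π/q² when q ≥ k and π/k² when k ≥ q. -/
/-!
With `c = cos θ`, division of `1 - c ^ 2` by `k ^ 2 + q ^ 2 - 2 k q c` splits the integrand into a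
multiple of `cos θ`, a constant, and a multiple of the Poisson kernel
`(k ^ 2 - q ^ 2) / (k ^ 2 + q ^ 2 - 2 k q cos θ)`. For `|q| < k` the Poisson integral formula,
applied to the constant function `1` on the disc of radius `k`, says that the kernel has integral
`2π` over a period, and the three contributions add up to `π / k ^ 2`. For `k = q` the integrand
is `(1 + cos θ) / (2 k ^ 2)` away from the null set `cos θ = 1`.
-/

open Real

lemma poissonKernel_circleMap (k q θ : ℝ) :
    poissonKernel 0 q (circleMap 0 k θ) =
      (k ^ 2 - q ^ 2) / (k ^ 2 + q ^ 2 - 2 * k * q * cos θ) := by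
  have hre : (circleMap 0 k θ).re = k * cos θ := by simp [circleMap]
  have him : (circleMap 0 k θ).im = k * sin θ := by simp [circleMap]
  rw [poissonKernel_def]
  simp only [sub_zero, ← Complex.normSq_eq_norm_sq, Complex.normSq_apply, Complex.sub_re,
    Complex.sub_im, hre, him, Complex.ofReal_re, Complex.ofReal_im]
  congr 1 <;> nlinarith [sin_sq_add_cos_sq θ]

theorem integral_poissonKernel {k q : ℝ} (h : |q| < k) :
    ∫ θ in (0 : ℝ)..2 * π, (k ^ 2 - q ^ 2) / (k ^ 2 + q ^ 2 - 2 * k * q * cos θ) =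
      2 * π := by
  have hq : (q : ℂ) ∈ Metric.ball 0 k := by simpa using h
  have hmean := DiffContOnCl.circleAverage_poissonKernel_smul
    (diffContOnCl_const (c := (1 : ℂ)) (s := Metric.ball 0 k)) hq
  rw [circleAverage_def] at hmean
  simp only [Pi.smul_apply', poissonKernel_circleMap, Complex.real_smul, mul_one,
    intervalIntegral.integral_ofReal] at hmean
  rw [← Complex.ofReal_mul, Complex.ofReal_eq_one, inv_mul_eq_one₀ (by positivity)] at hmean
  exact hmean.symm

lemma sq_add_sq_sub_two_mul_mul_cos_pos {k q : ℝ} (h : |q| < k) (θ : ℝ) :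
    0 < k ^ 2 + q ^ 2 - 2 * k * q * cos θ := by
  have hqcos : |q * cos θ| ≤ |q| := by
    rw [abs_mul]
    exact mul_le_of_le_one_right (abs_nonneg q) (abs_cos_le_one θ)
  nlinarith [le_abs_self (q * cos θ), abs_nonneg q, sq_abs q]

theorem integral_one_sub_cos_sq_div_of_abs_lt {k q : ℝ} (hq : q ≠ 0) (hqk : |q| < k) :
    ∫ θ in (0 : ℝ)..2 * π, (1 - cos θ ^ 2) / (k ^ 2 + q ^ 2 - 2 * k * q * cos θ) =
      π / k ^ 2 := by
  have hk : k ≠ 0 := ((abs_nonneg q).trans_lt hqk).ne'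
  have hD θ := (sq_add_sq_sub_two_mul_mul_cos_pos hqk θ).ne'
  have hdiv θ : (1 - cos θ ^ 2) / (k ^ 2 + q ^ 2 - 2 * k * q * cos θ) =
      (2 * k * q)⁻¹ * cos θ + ((k ^ 2 + q ^ 2) / (2 * k * q) ^ 2 -
        (k ^ 2 - q ^ 2) / (2 * k * q) ^ 2 *
          ((k ^ 2 - q ^ 2) / (k ^ 2 + q ^ 2 - 2 * k * q * cos θ))) := by
    set D := k ^ 2 + q ^ 2 - 2 * k * q * cos θ with hD_def
    have : D ≠ 0 := hD θ
    field_simp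
    rw [hD_def]
    ring
  have hP : IntervalIntegrable (fun θ => (k ^ 2 - q ^ 2) / (k ^ 2 + q ^ 2 - 2 * k * q * cos θ))
      MeasureTheory.volume 0 (2 * π) :=
    (continuous_const.div (by fun_prop) hD).intervalIntegrable _ _
  simp_rw [hdiv]
  rw [intervalIntegral.integral_add ((continuous_cos.intervalIntegrable _ _).const_mul _)
      (intervalIntegrable_const.sub (hP.const_mul _)),
    intervalIntegral.integral_sub intervalIntegrable_const (hP.const_mul _),
    intervalIntegral.integral_const_mul, intervalIntegral.integral_const_mul, integral_cos,
    integral_poissonKernel hqk, intervalIntegral.integral_const]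
  simp only [sin_two_pi, sin_zero, sub_zero, mul_zero, zero_add, smul_eq_mul]
  field_simp
  ring

theorem integral_one_sub_cos_sq_div_self {k : ℝ} (hk : k ≠ 0) :
    ∫ θ in (0 : ℝ)..2 * π, (1 - cos θ ^ 2) / (k ^ 2 + k ^ 2 - 2 * k * k * cos θ) =
      π / k ^ 2 := by
  have hcos : ∀ᵐ θ : ℝ, cos θ ≠ 1 :=
    ((Set.countable_range fun n : ℤ => n * (2 * π)).ae_notMem MeasureTheory.volume).mono
      fun θ hθ h1 => hθ ((cos_eq_one_iff θ).1 h1)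
  have hae : ∀ᵐ θ : ℝ, θ ∈ Set.uIoc 0 (2 * π) →
      (1 - cos θ ^ 2) / (k ^ 2 + k ^ 2 - 2 * k * k * cos θ) =
        (2 * k ^ 2)⁻¹ * (1 + cos θ) := by
    filter_upwards [hcos] with θ hθ _
    have : 1 - cos θ ≠ 0 := sub_ne_zero.2 hθ.symm
    rw [show k ^ 2 + k ^ 2 - 2 * k * k * cos θ = 2 * k ^ 2 * (1 - cos θ) by ring]
    field_simp
    ring
  rw [intervalIntegral.integral_congr_ae hae, intervalIntegral.integral_const_mul,
    intervalIntegral.integral_add intervalIntegrable_const (continuous_cos.intervalIntegrable _ _),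
    integral_cos]
  simp only [intervalIntegral.integral_const, sin_two_pi, sin_zero, sub_zero, add_zero,
    smul_eq_mul]
  field_simp

/-- The angular integral arising in the two-dimensional ghost form
factor of the Refined Gribov–Zwanziger theory: for all `k, q > 0`,
`∫₀^{2π} (1 − cos²φ)/(k² + q² − 2kq·cos φ) dφ = π/(max k q)²`. -/
theorem angular_integral (k q : ℝ) (hk : 0 < k) (hq : 0 < q) :
    ∫ φ in (0 : ℝ)..(2 * π),
        (1 - Real.cos φ ^ 2) / (k ^ 2 + q ^ 2 - 2 * k * q * Real.cos φ)
      = π / (max k q) ^ 2 := by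
  wlog hqk : q ≤ k generalizing k q
  · have hsymm φ : k ^ 2 + q ^ 2 - 2 * k * q * cos φ = q ^ 2 + k ^ 2 - 2 * q * k * cos φ := by
      ring
    simp_rw [hsymm, max_comm k q]
    exact this q k hq hk (le_of_not_ge hqk)
  rw [max_eq_left hqk]
  rcases hqk.lt_or_eq with hlt | rfl
  · exact integral_one_sub_cos_sq_div_of_abs_lt hq.ne' ((abs_of_pos hq).trans_lt hlt)
  · exact integral_one_sub_cos_sq_div_self hk.ne'
end

section
/- Let M > 0, m ≥ 0 and λ > 0, and set D(q) = q⁴ + (M² + m²)q² + λ⁴ for q ≥ 0. Define, for 0 < k, F(k) = (1/k²)·∫₀^k q(q² + M²)/D(q) dq + ∫_k^∞ (q² + M²)/(q·D(q)) dq. Then lim_{k → 0⁺} F(k)/log(1/k) = M²/λ⁴; in particular F(k) → +∞ as k → 0⁺. -/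
open MeasureTheory Real Filter

set_option maxHeartbeats 1000000

/-- Logarithmic infrared divergence of the leading-order ghost form
factor of the would-be Refined Gribov–Zwanziger theory in `d = 2`. With
`D(q) = q⁴ + (M² + m²)q² + λ⁴` and
`F(k) = (1/k²)·∫₀^k q(q² + M²)/D(q) dq + ∫_k^∞ (q² + M²)/(q·D(q)) dq`,
one has `F(k)/log(1/k) → M²/λ⁴` and `F(k) → +∞` as `k → 0⁺`. -/
theorem ghost_form_factor_log_divergence_d2 (M m lam : ℝ)
    (hM : 0 < M) (hm : 0 ≤ m) (hlam : 0 < lam) :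
    let D : ℝ → ℝ := fun q => q ^ 4 + (M ^ 2 + m ^ 2) * q ^ 2 + lam ^ 4
    let F : ℝ → ℝ := fun k =>
      (1 / k ^ 2) * (∫ q in (0 : ℝ)..k, q * (q ^ 2 + M ^ 2) / D q)
        + ∫ q in Set.Ioi k, (q ^ 2 + M ^ 2) / (q * D q)
    Tendsto (fun k => F k / Real.log (1 / k)) (nhdsWithin 0 (Set.Ioi 0))
        (nhds (M ^ 2 / lam ^ 4))
      ∧ Tendsto F (nhdsWithin 0 (Set.Ioi 0)) atTop := by
  intro D F
  have hDdef : ∀ q, D q = q ^ 4 + (M ^ 2 + m ^ 2) * q ^ 2 + lam ^ 4 := fun _ => rfl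
  have hl4 : (0:ℝ) < lam ^ 4 := by positivity
  have hDge : ∀ q, lam ^ 4 ≤ D q := by
    intro q; rw [hDdef]
    nlinarith [sq_nonneg (q^2), sq_nonneg q, mul_nonneg (by positivity : (0:ℝ) ≤ M^2 + m^2) (sq_nonneg q)]
  have hDpos : ∀ q, 0 < D q := fun q => lt_of_lt_of_le hl4 (hDge q)
  have hDcont : Continuous D := by
    have : D = fun q => q ^ 4 + (M ^ 2 + m ^ 2) * q ^ 2 + lam ^ 4 := rfl
    rw [this]; fun_prop
  set c : ℝ := lam ^ 4 - M ^ 4 - M ^ 2 * m ^ 2 with hc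
  set g : ℝ → ℝ := fun q => q * (c - M ^ 2 * q ^ 2) / (lam ^ 4 * D q) with hg
  set hfun : ℝ → ℝ := fun q => (q ^ 2 + M ^ 2) / (q * D q) with hhfun
  -- integrability of hfun on Ioi 1
  have hfun_meas : Measurable hfun := by
    rw [hhfun]
    refine Measurable.div (by fun_prop) (Measurable.mul measurable_id (hDcont.measurable))
  have hfun_nonneg : ∀ q : ℝ, 0 < q → 0 ≤ hfun q := by
    intro q hq
    exact div_nonneg (by positivity) (le_of_lt (mul_pos hq (hDpos q)))
  have hIoi1 : IntegrableOn hfun (Set.Ioi (1:ℝ)) := by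
    refine Integrable.mono' ((integrableOn_Ioi_rpow_of_lt (by norm_num : (-3:ℝ) < -1)
      one_pos).const_mul (1 + M ^ 2)) hfun_meas.aestronglyMeasurable ?_
    filter_upwards [ae_restrict_mem measurableSet_Ioi] with q hq
    have hq1 : (1:ℝ) < q := hq
    have hq0 : (0:ℝ) < q := lt_trans one_pos hq1
    rw [Real.norm_eq_abs, abs_of_nonneg (hfun_nonneg q hq0)]
    have hr : q ^ (-3:ℝ) = 1 / q ^ 3 := by
      rw [show (-3:ℝ) = -(3:ℕ) by norm_num, Real.rpow_neg hq0.le, Real.rpow_natCast, one_div]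
    rw [hr]
    show (q ^ 2 + M ^ 2) / (q * D q) ≤ (1 + M ^ 2) * (1 / q ^ 3)
    rw [mul_one_div, div_le_div_iff₀ (mul_pos hq0 (hDpos q)) (by positivity)]
    have hDq := hDdef q
    nlinarith [hDge q, mul_nonneg (mul_nonneg (sq_nonneg M) (pow_nonneg hq0.le 3))
      (by nlinarith : (0:ℝ) ≤ q ^ 2 - 1),
      mul_pos hq0 (hDpos q), pow_pos hq0 3, pow_pos hq0 5,
      mul_nonneg (mul_nonneg (sq_nonneg m) (sq_nonneg M)) (pow_nonneg hq0.le 3),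
      mul_nonneg hl4.le hq0.le, mul_nonneg (mul_nonneg (sq_nonneg M) hl4.le) hq0.le]
  set CI : ℝ := ∫ q in Set.Ioi (1:ℝ), hfun q with hCI
  have hCI0 : 0 ≤ CI := setIntegral_nonneg measurableSet_Ioi
    (fun q hq => hfun_nonneg q (lt_trans one_pos hq))
  set K : ℝ := (1 + M ^ 2) / (2 * lam ^ 4) + (|c| + M ^ 2) / (lam ^ 4 * lam ^ 4) + CI with hK
  -- the key estimate
  have key : ∀ k : ℝ, k ∈ Set.Ioo (0:ℝ) 1 →
      |F k - M ^ 2 / lam ^ 4 * Real.log (1 / k)| ≤ K := by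
    intro k hk
    obtain ⟨hk0, hk1⟩ := hk
    have hFk : F k = (1 / k ^ 2) * (∫ q in (0:ℝ)..k, q * (q ^ 2 + M ^ 2) / D q)
        + ∫ q in Set.Ioi k, hfun q := rfl
    -- continuity of hfun away from 0
    have hcont_h : ContinuousOn hfun (Set.Icc k 1) := by
      rw [hhfun]
      exact ContinuousOn.div (by fun_prop)
        (continuous_id.mul hDcont).continuousOn
        (fun x hx => (mul_pos (lt_of_lt_of_le hk0 hx.1) (hDpos x)).ne')
    have hIoc : IntegrableOn hfun (Set.Ioc k 1) :=
      (hcont_h.integrableOn_Icc).mono_set Set.Ioc_subset_Icc_self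
    have hsplit : ∫ q in Set.Ioi k, hfun q = (∫ q in Set.Ioc k 1, hfun q) + CI := by
      rw [hCI, ← setIntegral_union (Set.Ioc_disjoint_Ioi le_rfl) measurableSet_Ioi hIoc hIoi1,
        Set.Ioc_union_Ioi_eq_Ioi hk1.le]
    have hIoc_int : ∫ q in Set.Ioc k 1, hfun q = ∫ q in k..1, hfun q :=
      (intervalIntegral.integral_of_le hk1.le).symm
    -- decompose hfun on [k,1]
    have huIcc : Set.uIcc k 1 = Set.Icc k 1 := Set.uIcc_of_le hk1.le
    have heq : Set.EqOn hfun (fun q => M ^ 2 / lam ^ 4 * (1 / q) + g q) (Set.uIcc k 1) := by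
      intro q hq
      rw [huIcc] at hq
      have hq0 : (0:ℝ) < q := lt_of_lt_of_le hk0 hq.1
      have hDq : D q = q ^ 4 + (M ^ 2 + m ^ 2) * q ^ 2 + lam ^ 4 := hDdef q
      simp only [hhfun, hg, hc, hDq]
      have h1 : q ≠ 0 := hq0.ne'
      have h2 : q ^ 4 + (M ^ 2 + m ^ 2) * q ^ 2 + lam ^ 4 ≠ 0 := by rw [← hDq]; exact (hDpos q).ne'
      field_simp
      ring
    have hint1 : IntervalIntegrable (fun q : ℝ => M ^ 2 / lam ^ 4 * (1 / q)) volume k 1 := by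
      apply ContinuousOn.intervalIntegrable
      apply ContinuousOn.mul continuousOn_const
      apply ContinuousOn.div continuousOn_const continuousOn_id
      intro x hx; rw [huIcc] at hx; exact (lt_of_lt_of_le hk0 hx.1).ne'
    have hint2 : IntervalIntegrable g volume k 1 := by
      apply ContinuousOn.intervalIntegrable
      rw [hg]
      exact ContinuousOn.div (by fun_prop) (continuous_const.mul hDcont).continuousOn
        (fun x _ => (mul_pos hl4 (hDpos x)).ne')
    have hlogint : ∫ q in k..1, (1:ℝ) / q = Real.log (1 / k) := by
      rw [integral_one_div]
      intro h0
      rw [huIcc] at h0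
      exact absurd h0.1 (not_le.mpr hk0)
    have hdecomp : ∫ q in k..1, hfun q
        = M ^ 2 / lam ^ 4 * Real.log (1 / k) + ∫ q in k..1, g q := by
      rw [intervalIntegral.integral_congr heq, intervalIntegral.integral_add hint1 hint2,
        intervalIntegral.integral_const_mul, hlogint]
    -- first integral bounds
    have hf_cont : Continuous (fun q : ℝ => q * (q ^ 2 + M ^ 2) / D q) :=
      Continuous.div (by fun_prop) hDcont (fun q => (hDpos q).ne')
    have hI1_lb : 0 ≤ ∫ q in (0:ℝ)..k, q * (q ^ 2 + M ^ 2) / D q := by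
      apply intervalIntegral.integral_nonneg hk0.le
      intro q hq
      exact div_nonneg (by nlinarith [hq.1, sq_nonneg q, sq_nonneg M]) (hDpos q).le
    have hI1_ub : ∫ q in (0:ℝ)..k, q * (q ^ 2 + M ^ 2) / D q
        ≤ (1 + M ^ 2) / lam ^ 4 * (k ^ 2 / 2) := by
      have hgint : IntervalIntegrable (fun q : ℝ => (1 + M ^ 2) / lam ^ 4 * q) volume 0 k :=
        Continuous.intervalIntegrable (by fun_prop) _ _
      have hmono : ∫ q in (0:ℝ)..k, q * (q ^ 2 + M ^ 2) / D q
          ≤ ∫ q in (0:ℝ)..k, (1 + M ^ 2) / lam ^ 4 * q := by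
        apply intervalIntegral.integral_mono_on hk0.le
          (hf_cont.intervalIntegrable 0 k) hgint
        intro q hq
        rw [div_le_iff₀ (hDpos q)]
        have h1 : q ≤ 1 := le_trans hq.2 hk1.le
        have h2 : 0 ≤ q := hq.1
        have h3 := hDge q
        have h4 : (1 + M ^ 2) / lam ^ 4 * q * lam ^ 4 ≤ (1 + M ^ 2) / lam ^ 4 * q * D q :=
          mul_le_mul_of_nonneg_left h3 (by positivity)
        have h5 : (1 + M ^ 2) / lam ^ 4 * q * lam ^ 4 = (1 + M ^ 2) * q := by
          field_simp
        nlinarith [mul_nonneg h2 (by nlinarith : (0:ℝ) ≤ 1 - q ^ 2),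
          mul_nonneg h2 (sq_nonneg M)]
      calc ∫ q in (0:ℝ)..k, q * (q ^ 2 + M ^ 2) / D q
          ≤ ∫ q in (0:ℝ)..k, (1 + M ^ 2) / lam ^ 4 * q := hmono
        _ = (1 + M ^ 2) / lam ^ 4 * (k ^ 2 / 2) := by
            rw [intervalIntegral.integral_const_mul, integral_id]; ring
    have hI1 : (1 / k ^ 2) * (∫ q in (0:ℝ)..k, q * (q ^ 2 + M ^ 2) / D q)
        ∈ Set.Icc (0:ℝ) ((1 + M ^ 2) / (2 * lam ^ 4)) := by
      constructor
      · exact mul_nonneg (by positivity) hI1_lb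
      · have hk2 : (0:ℝ) < k ^ 2 := by positivity
        calc (1 / k ^ 2) * (∫ q in (0:ℝ)..k, q * (q ^ 2 + M ^ 2) / D q)
            ≤ (1 / k ^ 2) * ((1 + M ^ 2) / lam ^ 4 * (k ^ 2 / 2)) := by
              exact mul_le_mul_of_nonneg_left hI1_ub (by positivity)
          _ = (1 + M ^ 2) / (2 * lam ^ 4) := by
              have hkne : k ≠ 0 := hk0.ne'
              have hre : (1:ℝ) / k ^ 2 * ((1 + M ^ 2) / lam ^ 4 * (k ^ 2 / 2))
                  = (1 + M ^ 2) / (2 * lam ^ 4) * (k ^ 2 / k ^ 2) := by ring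
              rw [hre, div_self (pow_ne_zero 2 hkne), mul_one]
    -- bound on ∫ g
    have hgb : |∫ q in k..1, g q| ≤ (|c| + M ^ 2) / (lam ^ 4 * lam ^ 4) := by
      have : ‖∫ q in k..1, g q‖ ≤ (|c| + M ^ 2) / (lam ^ 4 * lam ^ 4) * |1 - k| := by
        apply intervalIntegral.norm_integral_le_of_norm_le_const
        intro q hq
        rw [Set.uIoc_of_le hk1.le] at hq
        have hq0 : 0 < q := lt_trans hk0 hq.1
        have hq1 : q ≤ 1 := hq.2
        have hqa : |q| ≤ 1 := by rw [abs_of_pos hq0]; exact hq1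
        rw [Real.norm_eq_abs, hg]
        have hnum : |q * (c - M ^ 2 * q ^ 2)| ≤ |c| + M ^ 2 := by
          rw [abs_mul]
          calc |q| * |c - M ^ 2 * q ^ 2| ≤ 1 * (|c| + M ^ 2 * q ^ 2) := by
                apply mul_le_mul hqa _ (abs_nonneg _) zero_le_one
                calc |c - M ^ 2 * q ^ 2| ≤ |c| + |M ^ 2 * q ^ 2| := abs_sub _ _
                  _ = |c| + M ^ 2 * q ^ 2 := by rw [abs_of_nonneg (mul_nonneg (sq_nonneg M) (sq_nonneg q))]
            _ ≤ |c| + M ^ 2 := by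
                have hq2 : q ^ 2 ≤ 1 := by nlinarith
                nlinarith [mul_le_mul_of_nonneg_left hq2 (sq_nonneg M)]
        rw [abs_div, abs_of_pos (mul_pos hl4 (hDpos q))]
        apply div_le_div₀ (by positivity) hnum (by positivity)
        exact mul_le_mul_of_nonneg_left (hDge q) hl4.le
      calc |∫ q in k..1, g q| ≤ (|c| + M ^ 2) / (lam ^ 4 * lam ^ 4) * |1 - k| := this
        _ ≤ (|c| + M ^ 2) / (lam ^ 4 * lam ^ 4) * 1 := by
            apply mul_le_mul_of_nonneg_left _ (by positivity)
            rw [abs_of_nonneg (by linarith)]; linarith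
        _ = (|c| + M ^ 2) / (lam ^ 4 * lam ^ 4) := mul_one _
    -- assemble
    have hFeq : F k - M ^ 2 / lam ^ 4 * Real.log (1 / k)
        = (1 / k ^ 2) * (∫ q in (0:ℝ)..k, q * (q ^ 2 + M ^ 2) / D q)
          + ((∫ q in k..1, g q) + CI) := by
      rw [hFk, hsplit, hIoc_int, hdecomp]; ring
    rw [hFeq, hK]
    have h1 := hI1.1
    have h2 := hI1.2
    have h3 := abs_le.mp hgb
    rw [abs_le]
    constructor
    · have : 0 ≤ (|c| + M ^ 2) / (lam ^ 4 * lam ^ 4) := by positivity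
      have : 0 ≤ (1 + M ^ 2) / (2 * lam ^ 4) := by positivity
      nlinarith [abs_nonneg c]
    · nlinarith [abs_nonneg c]
  -- limit facts
  have hlog : Tendsto (fun k : ℝ => Real.log (1 / k)) (nhdsWithin 0 (Set.Ioi 0)) atTop := by
    have heq : (fun k : ℝ => Real.log (1 / k)) = fun k => -Real.log k := by
      funext k; rw [one_div, Real.log_inv]
    rw [heq]
    exact tendsto_neg_atBot_atTop.comp Real.tendsto_log_nhdsGT_zero
  have hev : ∀ᶠ k in nhdsWithin (0:ℝ) (Set.Ioi 0), k ∈ Set.Ioo (0:ℝ) 1 :=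
    Ioo_mem_nhdsGT_of_mem (by norm_num : (0:ℝ) ∈ Set.Ico (0:ℝ) 1)
  have hev2 : ∀ᶠ k in nhdsWithin (0:ℝ) (Set.Ioi 0), 0 < Real.log (1 / k) :=
    hlog.eventually_gt_atTop 0
  have hzero : Tendsto (fun k => (F k - M ^ 2 / lam ^ 4 * Real.log (1 / k)) / Real.log (1 / k))
      (nhdsWithin 0 (Set.Ioi 0)) (nhds 0) := by
    refine squeeze_zero_norm' ?_
      (Tendsto.div_atTop (tendsto_const_nhds (x := K)) hlog)
    filter_upwards [hev, hev2] with k hk hlk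
    rw [Real.norm_eq_abs, abs_div, abs_of_pos hlk]
    exact (div_le_div_iff_of_pos_right hlk).mpr (key k hk)
  constructor
  · have h := hzero.const_add (M ^ 2 / lam ^ 4)
    rw [add_zero] at h
    apply Tendsto.congr' _ h
    filter_upwards [hev2] with k hlk
    field_simp
    ring
  · have hmul : Tendsto (fun k : ℝ => M ^ 2 / lam ^ 4 * Real.log (1 / k))
        (nhdsWithin 0 (Set.Ioi 0)) atTop :=
      Tendsto.const_mul_atTop (by positivity) hlog
    have hbase : Tendsto (fun k : ℝ => M ^ 2 / lam ^ 4 * Real.log (1 / k) - K)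
        (nhdsWithin 0 (Set.Ioi 0)) atTop := by
      simpa [sub_eq_add_neg] using tendsto_atTop_add_const_right _ (-K) hmul
    apply tendsto_atTop_mono' _ _ hbase
    filter_upwards [hev] with k hk
    have := (abs_le.mp (key k hk)).1
    linarith
end

section
/- For every λ > 0, there is no nonnegative Borel measure μ on [0, ∞) such that for all p > 0 one has ∫_{[0,∞)} 1/(p² + m²) dμ(m) = p²/(p⁴ + λ⁴). In other words, the Gribov-type gluon form factor 𝒟(p²) = p²/(p⁴ + λ⁴) admits no Källén–Lehmann spectral representation with nonnegative spectral measure. -/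
open MeasureTheory Real

/-- The Gribov-type gluon form factor `𝒟(p²) = p²/(p⁴ + λ⁴)` admits no
Källén–Lehmann spectral representation with nonnegative spectral measure: for every
`λ > 0` there is no (nonnegative Borel) measure `μ` on `[0, ∞)` with
`∫ 1/(p² + m²) dμ(m) = p²/(p⁴ + λ⁴)` for all `p > 0`. -/
theorem no_KL_representation (lam : ℝ) (hlam : 0 < lam) :
    ¬ ∃ μ : Measure ℝ,
        ∀ p : ℝ, 0 < p →
          ∫⁻ m in Set.Ici (0 : ℝ), ENNReal.ofReal (1 / (p ^ 2 + m ^ 2)) ∂μ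
            = ENNReal.ofReal (p ^ 2 / (p ^ 4 + lam ^ 4)) := by
  rintro ⟨μ, hμ⟩
  have h1 := hμ (lam / 2) (by positivity)
  have h2 := hμ lam hlam
  have mono : ∫⁻ m in Set.Ici (0 : ℝ), ENNReal.ofReal (1 / (lam ^ 2 + m ^ 2)) ∂μ
      ≤ ∫⁻ m in Set.Ici (0 : ℝ), ENNReal.ofReal (1 / ((lam / 2) ^ 2 + m ^ 2)) ∂μ := by
    refine lintegral_mono fun m => ENNReal.ofReal_le_ofReal ?_
    apply one_div_le_one_div_of_le
    · positivity
    · nlinarith [sq_nonneg lam]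
  rw [h1, h2] at mono
  have hle : lam ^ 2 / (lam ^ 4 + lam ^ 4) ≤ (lam / 2) ^ 2 / ((lam / 2) ^ 4 + lam ^ 4) := by
    rw [ENNReal.ofReal_le_ofReal_iff (by positivity)] at mono
    exact mono
  have hl4 : (0:ℝ) < lam ^ 4 := by positivity
  rw [div_le_div_iff₀ (by positivity) (by positivity)] at hle
  nlinarith [sq_nonneg lam, pow_pos hlam 4, pow_pos hlam 6]
end

section
/- Let d ≥ 1, p ∈ ℝ^d with p ≠ 0, α > 0 and c ≥ 0. The d × d real matrix Δ with entries Δ_{μν} = (‖p‖² + c/‖p‖²)·δ_{μν} + ( (1 − α)/α − c/‖p‖⁴ )·p_μ p_ν has determinant det Δ = (‖p‖² + c/‖p‖²)^{d−1} · ‖p‖²/α. In particular, log det Δ − log det Δ|_{c=0} = (d − 1)·( log(‖p‖² + c/‖p‖²) − log ‖p‖² ) is independent of the gauge parameter α. -/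
/-!
Write `Δ = a • 1 + b • p pᵀ` with `a = ‖p‖² + c/‖p‖²`. By the matrix determinant lemma,
`det Δ = a^(d-1) (a + b ‖p‖²)`: the transverse eigenvalue `a` has multiplicity `d - 1`, and in
the longitudinal eigenvalue `a + b ‖p‖² = ‖p‖²/α` the Gribov parameter cancels. So `α` enters
`det Δ` only through the factor `1/α`, which drops out of `log det Δ - log det Δ|_{c=0}`.
-/

open Real

namespace Matrix

variable {K n : Type*} [Field K] [Fintype n] [DecidableEq n]

theorem det_smul_one_add_vecMulVec [Nonempty n] {a : K} (ha : a ≠ 0) (u w : n → K) :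
    (a • 1 + vecMulVec u w).det = a ^ (Fintype.card n - 1) * (a + w ⬝ᵥ u) := by
  have hfactor : a • 1 + vecMulVec u w = a • (1 + vecMulVec (a⁻¹ • u) w) := by
    rw [smul_add, ← smul_vecMulVec, smul_inv_smul₀ ha]
  rw [hfactor, det_smul, vecMulVec_eq Unit, det_one_add_replicateCol_mul_replicateRow,
    dotProduct_smul, smul_eq_mul, ← Nat.succ_pred_eq_of_pos Fintype.card_pos, pow_succ,
    Nat.pred_eq_sub_one, Nat.succ_sub_one]
  field_simp

end Matrix

theorem EuclideanSpace.dotProduct_self {ι : Type*} [Fintype ι] (p : EuclideanSpace ℝ ι) :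
    ⇑p ⬝ᵥ ⇑p = ‖p‖ ^ 2 := by
  rw [← real_inner_self_eq_norm_sq, EuclideanSpace.inner_eq_star_dotProduct]
  rfl

theorem log_pow_mul_sub_log_pow_mul {x y k : ℝ} (hx : x ≠ 0) (hy : y ≠ 0) (hk : k ≠ 0) (n : ℕ) :
    log (x ^ n * k) - log (y ^ n * k) = n * (log x - log y) := by
  rw [log_mul (pow_ne_zero n hx) hk, log_mul (pow_ne_zero n hy) hk, log_pow, log_pow]
  ring

theorem det_GZ_kernel {d : ℕ} (hd : 1 ≤ d) {p : EuclideanSpace ℝ (Fin d)} (hp : p ≠ 0)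
    {α c : ℝ} (hα : α ≠ 0) (hc : 0 ≤ c) :
    (Matrix.of fun μ ν => (‖p‖ ^ 2 + c / ‖p‖ ^ 2) * (if μ = ν then 1 else 0)
        + ((1 - α) / α - c / ‖p‖ ^ 4) * (p μ * p ν)).det
      = (‖p‖ ^ 2 + c / ‖p‖ ^ 2) ^ (d - 1) * ‖p‖ ^ 2 / α := by
  have : Nonempty (Fin d) := Fin.pos_iff_nonempty.mp hd
  have hp0 : 0 < ‖p‖ := norm_pos_iff.mpr hp
  set a := ‖p‖ ^ 2 + c / ‖p‖ ^ 2
  set b := (1 - α) / α - c / ‖p‖ ^ 4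
  have hmat : (Matrix.of fun μ ν => a * (if μ = ν then 1 else 0) + b * (p μ * p ν))
      = a • 1 + Matrix.vecMulVec (b • ⇑p) ⇑p := by
    ext μ ν
    simp [Matrix.one_apply, Matrix.vecMulVec_apply]
  have hlongitudinal : a + b * ‖p‖ ^ 2 = ‖p‖ ^ 2 / α := by
    simp only [a, b]
    field_simp
    ring
  rw [hmat, Matrix.det_smul_one_add_vecMulVec (by positivity), dotProduct_smul,
    EuclideanSpace.dotProduct_self, smul_eq_mul, Fintype.card_fin, hlongitudinal, mul_div_assoc]

/-- Determinant of the momentum-space quadratic kernel of the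
Gribov–Zwanziger action in linear covariant gauges: for `p ≠ 0`, `α > 0`, `c ≥ 0`, the
matrix `Δ_{μν} = (‖p‖² + c/‖p‖²)δ_{μν} + ((1 − α)/α − c/‖p‖⁴) p_μ p_ν` has determinant
`(‖p‖² + c/‖p‖²)^{d−1}·‖p‖²/α`; in particular `log det Δ − log det Δ|_{c=0}` is
independent of the gauge parameter `α`. -/
theorem GZ_kernel_determinant (d : ℕ) (hd : 1 ≤ d)
    (p : EuclideanSpace ℝ (Fin d)) (hp : p ≠ 0) (α c : ℝ) (hα : 0 < α) (hc : 0 ≤ c) :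
    let Δ : ℝ → Matrix (Fin d) (Fin d) ℝ := fun c' => Matrix.of fun μ ν =>
      (‖p‖ ^ 2 + c' / ‖p‖ ^ 2) * (if μ = ν then 1 else 0)
        + ((1 - α) / α - c' / ‖p‖ ^ 4) * (p μ * p ν)
    (Δ c).det = (‖p‖ ^ 2 + c / ‖p‖ ^ 2) ^ (d - 1) * ‖p‖ ^ 2 / α
      ∧ Real.log (Δ c).det - Real.log (Δ 0).det
          = (d - 1) * (Real.log (‖p‖ ^ 2 + c / ‖p‖ ^ 2) - Real.log (‖p‖ ^ 2)) := by
  intro Δ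
  have hdet : (Δ c).det = _ := det_GZ_kernel hd hp hα.ne' hc
  refine ⟨hdet, ?_⟩
  have hp0 : 0 < ‖p‖ := norm_pos_iff.mpr hp
  rw [hdet, det_GZ_kernel hd hp hα.ne' le_rfl, zero_div, add_zero, mul_div_assoc, mul_div_assoc,
    log_pow_mul_sub_log_pow_mul (by positivity) (by positivity) (by positivity), Nat.cast_sub hd,
    Nat.cast_one]
end
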